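/- For every natural number n and every Boolean function φ : (Fin n → Bool) → Bool, the (0ⁿ, 0ⁿ) entry of the matrix product H_n * D_φ * H_n equals 1 - 2 * #φ / 2^n, where #φ is the number of satisfying assignments of φ. (This is the paper's computation that the first matrix entry of the Hadamard-conjugated phase oracle circuit equals 1 - #φ/2^{n-1}.) -/

import Mathlib

/-! The row and the column of `H_n` indexed by `0ⁿ` are constant, equal to `1 / √(2^n)`, so the
entry is the average of the diagonal signs `(-1)^{φ x}`; these sum to `2^n - 2 #φ`. -/

open Finset

/-- The `n`-qubit Walsh–Hadamard matrix. -/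
noncomputable def walshHadamard (n : ℕ) : Matrix (Fin n → Bool) (Fin n → Bool) ℝ :=
  fun x y =>
    (-1 : ℝ) ^ (Finset.univ.filter (fun i : Fin n => x i = true ∧ y i = true)).card /
      Real.sqrt (2 ^ n)

/-- The phase-oracle matrix of `φ`: the diagonal matrix with entries `(-1)^{φ(x)}`. -/
def phaseOracle (n : ℕ) (φ : (Fin n → Bool) → Bool) :
    Matrix (Fin n → Bool) (Fin n → Bool) ℝ :=
  Matrix.diagonal (fun x => (-1 : ℝ) ^ (if φ x then 1 else 0))

lemma walshHadamard_zero_left (n : ℕ) (x : Fin n → Bool) :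
    walshHadamard n (fun _ => false) x = (Real.sqrt (2 ^ n))⁻¹ := by
  simp [walshHadamard]

lemma walshHadamard_zero_right (n : ℕ) (x : Fin n → Bool) :
    walshHadamard n x (fun _ => false) = (Real.sqrt (2 ^ n))⁻¹ := by
  simp [walshHadamard]

lemma Matrix.mul_diagonal_mul_apply {ι R : Type*} [Fintype ι] [DecidableEq ι]
    [NonUnitalNonAssocSemiring R] (A B : Matrix ι ι R) (d : ι → R) (i j : ι) :
    (A * Matrix.diagonal d * B) i j = ∑ k, A i k * d k * B k j := by
  rw [Matrix.mul_apply]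
  simp only [Matrix.mul_diagonal]

lemma sum_neg_one_pow_ite {α R : Type*} [Fintype α] [Ring R] (p : α → Bool) :
    ∑ x, (-1 : R) ^ (if p x then 1 else 0) =
      Fintype.card α - 2 * Fintype.card {x // p x = true} := by
  have hterm : ∀ x, (-1 : R) ^ (if p x then 1 else 0) = 1 - 2 * (if p x then 1 else 0) := by
    intro x
    cases p x <;> norm_num
  simp only [hterm, Finset.sum_sub_distrib, ← Finset.mul_sum, Finset.sum_boole,
    Fintype.card_subtype, Finset.sum_const, Finset.card_univ, nsmul_eq_mul, mul_one]

/-- The `(0ⁿ, 0ⁿ)` entry of the Hadamard-conjugated phase oracle circuit equals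
`1 - 2 * #φ / 2^n = 1 - #φ / 2^(n-1)`, where `#φ` is the number of satisfying
assignments of `φ`. -/
theorem hadamard_phaseOracle_hadamard_entry (n : ℕ) (φ : (Fin n → Bool) → Bool) :
    (walshHadamard n * phaseOracle n φ * walshHadamard n)
        (fun _ => false) (fun _ => false) =
      1 - 2 * (Fintype.card {x : Fin n → Bool // φ x = true} : ℝ) / 2 ^ n := by
  have hinv : (Real.sqrt (2 ^ n))⁻¹ * (Real.sqrt (2 ^ n))⁻¹ = ((2 : ℝ) ^ n)⁻¹ := by
    rw [← mul_inv, Real.mul_self_sqrt (by positivity)]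
  rw [phaseOracle, Matrix.mul_diagonal_mul_apply]
  simp only [walshHadamard_zero_left, walshHadamard_zero_right]
  calc ∑ x, (Real.sqrt (2 ^ n))⁻¹ * (-1 : ℝ) ^ (if φ x then 1 else 0) * (Real.sqrt (2 ^ n))⁻¹
      = (∑ x, (-1 : ℝ) ^ (if φ x then 1 else 0)) / 2 ^ n := by
        rw [Finset.sum_div]
        refine Finset.sum_congr rfl fun x _ => ?_
        rw [mul_right_comm, hinv, div_eq_inv_mul]
    _ = 1 - 2 * (Fintype.card {x : Fin n → Bool // φ x = true} : ℝ) / 2 ^ n := by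
        rw [sum_neg_one_pow_ite]
        simp only [Fintype.card_fun, Fintype.card_bool, Fintype.card_fin, Nat.cast_pow,
          Nat.cast_ofNat]
        field_simp
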